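/- arXiv:1808.04052 — 2 statements merged into one kernel-verified Lean document; each statement's English description precedes it below -/
import Mathlib

section
/- Let a, c, b, η ∈ ℂ with a ≠ 0, c² = b, and let g, h, u be polynomials. If f(z) = c·e^{az/2} + f₀(z) with f₀(z) = -(1/2)(e^{aη/2}g(z) + (a/2)h(z) + u(z)), and v(z) = -(f₀(z)² + g(z)f₀(z+η) + h(z)f₀'(z) + u(z)f₀(z)), then f satisfies f(z)² + g(z)f(z+η) + h(z)f'(z) + u(z)f(z) + v(z) = b·e^{az} for all z ∈ ℂ. -/
open Complex Polynomial

theorem stmt_9 (a c b η : ℂ) (ha : a ≠ 0) (hcb : c ^ 2 = b) (g h u : ℂ[X])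
    (f₀ : ℂ[X])
    (hf₀ : f₀ = -(1 / 2 : ℂ) • (C (exp (a * η / 2)) * g + C (a / 2) * h + u))
    (v : ℂ → ℂ)
    (hv : ∀ z : ℂ, v z = -((f₀.eval z) ^ 2 + g.eval z * f₀.eval (z + η)
      + h.eval z * (derivative f₀).eval z + u.eval z * f₀.eval z))
    (f : ℂ → ℂ) (hf : ∀ z : ℂ, f z = c * exp (a * z / 2) + f₀.eval z) :
    ∀ z : ℂ, (f z) ^ 2 + g.eval z * f (z + η)
      + h.eval z * ((a * c / 2) * exp (a * z / 2) + (derivative f₀).eval z)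
      + u.eval z * f z + v z = b * exp (a * z) := by
  intro z
  have e1 : exp (a * (z + η) / 2) = exp (a * z / 2) * exp (a * η / 2) := by
    rw [← Complex.exp_add]; ring_nf
  have e2 : exp (a * z) = exp (a * z / 2) * exp (a * z / 2) := by
    rw [← Complex.exp_add]; ring_nf
  have hFz : f₀.eval z
      = -(1 / 2 : ℂ) * (exp (a * η / 2) * g.eval z + (a / 2) * h.eval z + u.eval z) := by
    simp [hf₀]; ring
  rw [hf, hv, e2, hf, e1, hFz]
  linear_combination (exp (a * z / 2))^2 * hcb
end

section
/- Let n be a nonzero integer, b = 3πn, and q a complex number with q³ = (-1)^{n+1}·(27/4)·c² for a nonzero constant c. Then for a suitable nonzero constant α the function f(z) = α·sin(bz/3) satisfies f(z)³ + q·f(z+1) = c·sin(bz) for all z ∈ ℂ. -/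
open Complex

theorem stmt_13 (n : ℤ) (hn : n ≠ 0) (b q c : ℂ) (hc : c ≠ 0)
    (hb : b = 3 * Real.pi * n)
    (hq : q ^ 3 = (-1 : ℂ) ^ (n + 1) * (27 / 4) * c ^ 2) :
    ∃ α : ℂ, α ≠ 0 ∧ ∀ z : ℂ,
      (α * Complex.sin (b * z / 3)) ^ 3 + q * (α * Complex.sin (b * (z + 1) / 3))
        = c * Complex.sin (b * z) := by
  set m : ℂ := (-1 : ℂ) ^ n with hm_def
  have hm : m ≠ 0 := zpow_ne_zero n (by norm_num)
  have hm2 : m * m = 1 := by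
    rw [hm_def, ← zpow_add₀ (by norm_num : (-1:ℂ) ≠ 0)]
    exact Even.neg_one_zpow ⟨n, by ring⟩
  have hsucc : (-1 : ℂ) ^ (n + 1) = -m := by
    rw [hm_def, zpow_add₀ (by norm_num : (-1:ℂ) ≠ 0)]; ring
  rw [hsucc] at hq
  have hq0 : q ≠ 0 := by
    intro h
    rw [h, zero_pow (by norm_num)] at hq
    apply hc
    have hc2 : c ^ 2 = 0 := by linear_combination ((4:ℂ)/27 * m) * hq - c ^ 2 * hm2
    exact pow_eq_zero_iff (by norm_num) |>.mp hc2
  refine ⟨3 * c * m / q,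
    div_ne_zero (mul_ne_zero (mul_ne_zero (by norm_num) hc) hm) hq0, ?_⟩
  intro z
  have h1 : b * (z + 1) / 3 = b * z / 3 + (n : ℂ) * (Real.pi : ℂ) := by
    rw [hb]; push_cast; ring
  have h2 : Complex.sin (b * z / 3 + (n : ℂ) * (Real.pi : ℂ)) = m * Complex.sin (b * z / 3) := by
    rw [hm_def, ← Int.cast_negOnePow ℂ n]
    exact Complex.sin_antiperiodic.add_int_mul_eq n
  set s := Complex.sin (b * z / 3) with hs
  have h3 : Complex.sin (b * z) = 3 * s - 4 * s ^ 3 := by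
    rw [show b * z = 3 * (b * z / 3) by ring, Complex.sin_three_mul]
  rw [h1, h2, h3]
  have hα3 : (3 * c * m / q) ^ 3 = -4 * c := by
    rw [div_pow, div_eq_iff (pow_ne_zero 3 hq0), hq]
    linear_combination (27 * c ^ 3 * m) * hm2
  have hqα : q * (3 * c * m / q) * m = 3 * c := by
    field_simp
    linear_combination hm2
  calc (3 * c * m / q * s) ^ 3 + q * (3 * c * m / q * (m * s))
      = (3 * c * m / q) ^ 3 * s ^ 3 + (q * (3 * c * m / q) * m) * s := by ring
    _ = -4 * c * s ^ 3 + 3 * c * s := by rw [hα3, hqα]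
    _ = c * (3 * s - 4 * s ^ 3) := by ring
end
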